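/- Let H be an N × N Hermitian matrix and let ρ_L(H) denote the maximum of the spectral radii of all L × L principal submatrices of H. Let λ be an eigenvalue of H with associated unit eigenvector v. If v is (L, η)-localized with η < 1, then |λ| ≤ (ρ_L(H) + √η ‖H‖) / √(1 − η), where ‖H‖ is the operator norm of H. -/

import Mathlib

open MeasureTheory Filter Topology ProbabilityTheory Matrix
open scoped Classical ENNReal

noncomputable section

/-- `L` is a slowly varying function. -/
def SlowlyVarying (L : ℝ → ℝ) : Prop :=
  ∀ s : ℝ, 0 < s → Filter.Tendsto (fun t => L (s * t) / L t) Filter.atTop (nhds 1)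

/-- The `l`-th largest value (1-indexed) of a finite family of reals. -/
def kthLargest {ι : Type*} [Fintype ι] (f : ι → ℝ) (l : ℕ) : ℝ :=
  ((Finset.univ.val.map f).sort (· ≤ ·)).getD
    (((Finset.univ.val.map f).sort (· ≤ ·)).length - l) 0

/-- The `l`-th largest eigenvalue (1-indexed) of a Hermitian matrix (`0` if not Hermitian). -/
def eigDesc {ι : Type*} [Fintype ι] [DecidableEq ι] (H : Matrix ι ι ℂ) (l : ℕ) : ℝ :=
  if hH : H.IsHermitian then kthLargest hH.eigenvalues l else 0

/-- Operator (spectral) norm of a complex matrix, w.r.t. Euclidean norms. -/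
def matOpNorm {m n : Type*} [Fintype m] [Fintype n] [DecidableEq n]
    (A : Matrix m n ℂ) : ℝ :=
  ‖LinearMap.toContinuousLinearMap (Matrix.toEuclideanLin A)‖

/-- The Euclidean (ℓ²) norm of a finitely supported complex vector. -/
def euclNorm {ι : Type*} [Fintype ι] (v : ι → ℂ) : ℝ :=
  Real.sqrt (∑ i, ‖v i‖ ^ 2)

/-- Convergence in probability of a sequence of real random variables to a constant. -/
def TendstoInProb {Ω : Type*} [MeasurableSpace Ω] (P : Measure Ω)
    (f : (n : ℕ) → Ω → ℝ) (c : ℝ) : Prop :=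
  ∀ ε : ℝ, 0 < ε →
    Filter.Tendsto (fun n => P {ω | ε < |f n ω - c|}) Filter.atTop (nhds 0)

/-- A sequence of events holds with exponentially high probability. -/
def WEHP {Ω : Type*} [MeasurableSpace Ω] (P : Measure Ω) (E : ℕ → Set Ω) : Prop :=
  ∃ C θ : ℝ, 0 < C ∧ 0 < θ ∧ ∃ n₀ : ℕ, ∀ n ≥ n₀,
    1 - ENNReal.ofReal (Real.exp (-C * (n : ℝ) ^ θ)) ≤ P (E n)

/-- A unit vector is `(L, η)`-localized if some coordinate set of cardinality `L`
carries more than `1 - η` of its squared mass. -/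
def IsLocalized {ι : Type*} [Fintype ι] (v : ι → ℂ) (L : ℕ) (η : ℝ) : Prop :=
  ∃ S : Finset ι, S.card = L ∧ 1 - η < ∑ j ∈ S, ‖v j‖ ^ 2

/-- The scaling constant `c_{np} = inf { t : P(|x·y| > t) ≤ 1/(p n^μ) }`,
using `P(|x·y(n)| > t) = n^(μ-1) L(t) t^(-α)`. -/
def cnp (α μ : ℝ) (L : ℝ → ℝ) (p : ℕ → ℕ) (n : ℕ) : ℝ :=
  sInf {t : ℝ | 0 < t ∧ (n : ℝ) ^ (μ - 1) * (L t * t ^ (-α)) ≤ 1 / ((p n : ℝ) * (n : ℝ) ^ μ)}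

/-- The Poisson probability mass function with mean `m`. -/
def poissonPMF (m : ℝ) (c : ℕ) : ℝ :=
  Real.exp (-m) * m ^ c / (Nat.factorial c)

/-- The Marchenko–Pastur law with ratio `ρ`. -/
def mpLaw (ρ : ℝ) : Measure ℝ :=
  MeasureTheory.volume.withDensity fun t => ENNReal.ofReal
    (if (1 - Real.sqrt ρ) ^ 2 ≤ t ∧ t ≤ (1 + Real.sqrt ρ) ^ 2 then
      Real.sqrt (((1 + Real.sqrt ρ) ^ 2 - t) * (t - (1 - Real.sqrt ρ) ^ 2)) /
        (2 * Real.pi * ρ * t)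
     else 0)

/-- Spectral radius of a Hermitian matrix (`0` if not Hermitian). -/
def specRad {ι : Type*} [Fintype ι] [DecidableEq ι] (A : Matrix ι ι ℂ) : ℝ :=
  if hA : A.IsHermitian then ⨆ i, |hA.eigenvalues i| else 0

/-- `ρ_L(H)`: the maximal spectral radius among `L × L` principal submatrices of `H`. -/
def rhoL {N : ℕ} (H : Matrix (Fin N) (Fin N) ℂ) (L : ℕ) : ℝ :=
  sSup {r | ∃ S : Finset (Fin N), S.card = L ∧
    r = specRad (H.submatrix (fun a : {i // i ∈ S} => (a : Fin N))
      (fun a : {i // i ∈ S} => (a : Fin N)))}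

/-! The eigen-equation `H v = λ v`, restricted to the set `S` carrying the mass of `v`, reads
`λ v_S = H_S v_S + (H t)_S`, where `H_S` is the principal submatrix on `S` and `t = v - 1_S v`
is the tail of `v`. Hence `|λ| ‖v_S‖ ≤ ρ(H_S) ‖v_S‖ + ‖H‖ ‖t‖` with `ρ(H_S) ≤ ρ_L(H)`, and
localization gives `√(1 - η) < ‖v_S‖ ≤ 1` and `‖t‖ < √η`. -/

lemma euclNorm_restrict {ι : Type*} (S : Finset ι) (u : ι → ℂ) :
    euclNorm (fun a : S => u a) = √(∑ i ∈ S, ‖u i‖ ^ 2) := by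
  rw [euclNorm, Finset.sum_coe_sort S fun i => ‖u i‖ ^ 2]

section EuclNorm

variable {ι : Type*} [Fintype ι]

lemma euclNorm_eq_norm_toLp (u : ι → ℂ) : euclNorm u = ‖WithLp.toLp 2 u‖ :=
  (EuclideanSpace.norm_eq _).symm

lemma euclNorm_add_le (u w : ι → ℂ) : euclNorm (u + w) ≤ euclNorm u + euclNorm w := by
  simpa only [euclNorm_eq_norm_toLp, WithLp.toLp_add] using norm_add_le _ _

lemma euclNorm_smul (c : ℂ) (u : ι → ℂ) : euclNorm (c • u) = ‖c‖ * euclNorm u := by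
  simpa only [euclNorm_eq_norm_toLp, WithLp.toLp_smul] using norm_smul _ _

lemma euclNorm_mulVec_le_matOpNorm {κ : Type*} [Fintype κ] [DecidableEq κ]
    (A : Matrix ι κ ℂ) (u : κ → ℂ) : euclNorm (A *ᵥ u) ≤ matOpNorm A * euclNorm u := by
  simpa [euclNorm_eq_norm_toLp, matOpNorm] using
    (LinearMap.toContinuousLinearMap (Matrix.toEuclideanLin A)).le_opNorm (WithLp.toLp 2 u)

lemma euclNorm_indicator_compl (S : Finset ι) (u : ι → ℂ) :
    euclNorm ((↑S : Set ι)ᶜ.indicator u) = √(∑ i, ‖u i‖ ^ 2 - ∑ i ∈ S, ‖u i‖ ^ 2) := by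
  have hsplit := Finset.sum_add_sum_compl S fun i => ‖u i‖ ^ 2
  rw [euclNorm, ← hsplit, add_sub_cancel_left, ← Finset.sum_subset (Finset.subset_univ Sᶜ)]
  · refine congrArg _ (Finset.sum_congr rfl fun i hi => ?_)
    rw [Set.indicator_of_mem (by simpa using hi)]
  · intro i _ hi
    rw [Set.indicator_of_notMem (by simpa using hi), norm_zero, sq, zero_mul]

lemma euclNorm_restrict_le (S : Finset ι) (u : ι → ℂ) :
    euclNorm (fun a : S => u a) ≤ euclNorm u := by
  rw [euclNorm_restrict, euclNorm]
  exact Real.sqrt_le_sqrt <|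
    Finset.sum_le_sum_of_subset_of_nonneg (Finset.subset_univ S) fun i _ _ => by positivity

end EuclNorm

theorem LinearMap.IsSymmetric.norm_apply_le_iSup_abs_eigenvalues_mul_norm {𝕜 E : Type*}
    [RCLike 𝕜] [NormedAddCommGroup E] [InnerProductSpace 𝕜 E] [FiniteDimensional 𝕜 E]
    {T : E →ₗ[𝕜] E} (hT : T.IsSymmetric) {n : ℕ} (hn : Module.finrank 𝕜 E = n) (x : E) :
    ‖T x‖ ≤ (⨆ i, |hT.eigenvalues hn i|) * ‖x‖ := by
  set B := hT.eigenvectorBasis hn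
  set r := ⨆ i, |hT.eigenvalues hn i|
  have hr : ∀ i, |hT.eigenvalues hn i| ≤ r := fun i =>
    le_ciSup (f := fun i => |hT.eigenvalues hn i|) (Set.finite_range _).bddAbove i
  have hr0 : 0 ≤ r := Real.iSup_nonneg fun i => abs_nonneg _
  rw [← B.repr.norm_map, ← B.repr.norm_map x, EuclideanSpace.norm_eq, EuclideanSpace.norm_eq,
    ← Real.sqrt_sq hr0, ← Real.sqrt_mul (sq_nonneg r), Finset.mul_sum]
  gcongr with i
  rw [hT.eigenvectorBasis_apply_self_apply, norm_mul, mul_pow, RCLike.norm_ofReal]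
  gcongr
  exact hr i

lemma specRad_nonneg {ι : Type*} [Fintype ι] [DecidableEq ι] (A : Matrix ι ι ℂ) :
    0 ≤ specRad A := by
  unfold specRad
  split_ifs
  · exact Real.iSup_nonneg fun i => abs_nonneg _
  · exact le_rfl

theorem Matrix.IsHermitian.euclNorm_mulVec_le_specRad {ι : Type*} [Fintype ι] [DecidableEq ι]
    {A : Matrix ι ι ℂ} (hA : A.IsHermitian) (u : ι → ℂ) :
    euclNorm (A *ᵥ u) ≤ specRad A * euclNorm u := by
  have hspec : specRad A = ⨆ j, |(isSymmetric_toEuclideanLin_iff.mpr hA).eigenvalues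
      finrank_euclideanSpace j| := by
    rw [specRad, dif_pos hA]
    exact (Fintype.equivOfCardEq (Fintype.card_fin _)).symm.iSup_comp
      (g := fun j => |(isSymmetric_toEuclideanLin_iff.mpr hA).eigenvalues
        finrank_euclideanSpace j|)
  simpa [hspec, euclNorm_eq_norm_toLp] using
    (isSymmetric_toEuclideanLin_iff.mpr hA).norm_apply_le_iSup_abs_eigenvalues_mul_norm
      finrank_euclideanSpace (WithLp.toLp 2 u)

lemma Matrix.restrict_mulVec_indicator {ι : Type*} [Fintype ι] (A : Matrix ι ι ℂ)
    (S : Finset ι) (u : ι → ℂ) :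
    (fun a : S => (A *ᵥ (↑S : Set ι).indicator u) a) =
      A.submatrix (↑) (↑) *ᵥ fun a : S => u a := by
  ext a
  simp only [mulVec, dotProduct, submatrix_apply]
  rw [Finset.sum_coe_sort S fun i => A a i * u i]
  simp [Set.indicator_apply, mul_ite, Finset.sum_ite_mem]

lemma specRad_submatrix_le_rhoL {N : ℕ} (H : Matrix (Fin N) (Fin N) ℂ) (S : Finset (Fin N)) :
    specRad (H.submatrix (↑) (↑) : Matrix S S ℂ) ≤ rhoL H S.card := by
  refine le_csSup ?_ ⟨S, rfl, rfl⟩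
  refine ((Set.finite_range fun T : Finset (Fin N) =>
    specRad (H.submatrix (↑) (↑) : Matrix T T ℂ)).subset ?_).bddAbove
  rintro r ⟨T, -, rfl⟩
  exact ⟨T, rfl⟩

theorem Matrix.IsHermitian.abs_mul_sqrt_mass_le {ι : Type*} [Fintype ι] [DecidableEq ι]
    {H : Matrix ι ι ℂ} (hH : H.IsHermitian) (S : Finset ι) {lam : ℝ} {v : ι → ℂ}
    (hv : euclNorm v = 1) (heig : H *ᵥ v = (lam : ℂ) • v) :
    |lam| * √(∑ i ∈ S, ‖v i‖ ^ 2) ≤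
      specRad (H.submatrix (↑) (↑) : Matrix S S ℂ) +
        √(1 - ∑ i ∈ S, ‖v i‖ ^ 2) * matOpNorm H := by
  set w : S → ℂ := fun a => v a
  set tail := (↑S : Set ι)ᶜ.indicator v
  have hmass : ∑ i, ‖v i‖ ^ 2 = 1 := by
    rwa [euclNorm, Real.sqrt_eq_one] at hv
  have hw : euclNorm w ≤ 1 := hv ▸ euclNorm_restrict_le S v
  have htail : euclNorm tail = √(1 - ∑ i ∈ S, ‖v i‖ ^ 2) := by
    rw [euclNorm_indicator_compl, hmass]
  have hsplit : H *ᵥ v = H *ᵥ (↑S : Set ι).indicator v + H *ᵥ tail := by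
    rw [← mulVec_add, Set.indicator_self_add_compl]
  have hrestrict : (lam : ℂ) • w =
      (H.submatrix (↑) (↑) : Matrix S S ℂ) *ᵥ w + fun a : S => (H *ᵥ tail) a := by
    calc (lam : ℂ) • w = fun a : S => (H *ᵥ v) a := by rw [heig]; rfl
      _ = (fun a : S => (H *ᵥ (↑S : Set ι).indicator v) a) + fun a : S => (H *ᵥ tail) a := by
          rw [hsplit]; rfl
      _ = _ := by rw [Matrix.restrict_mulVec_indicator]
  calc |lam| * √(∑ i ∈ S, ‖v i‖ ^ 2) = euclNorm ((lam : ℂ) • w) := by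
        rw [euclNorm_smul, Complex.norm_real, Real.norm_eq_abs, euclNorm_restrict]
    _ ≤ euclNorm ((H.submatrix (↑) (↑) : Matrix S S ℂ) *ᵥ w) + euclNorm (H *ᵥ tail) := by
        rw [hrestrict]
        exact (euclNorm_add_le _ _).trans (add_le_add le_rfl (euclNorm_restrict_le S _))
    _ ≤ specRad (H.submatrix (↑) (↑) : Matrix S S ℂ) * 1 + matOpNorm H * euclNorm tail := by
        gcongr
        · exact (hH.submatrix _).euclNorm_mulVec_le_specRad w |>.trans
            (mul_le_mul_of_nonneg_left hw (specRad_nonneg _))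
        · exact euclNorm_mulVec_le_matOpNorm H tail
    _ = _ := by rw [mul_one, htail, mul_comm]

theorem stmt15_general
    {N : ℕ} (H : Matrix (Fin N) (Fin N) ℂ) (hH : H.IsHermitian)
    (Lc : ℕ) (η : ℝ) (hη1 : η < 1)
    (lam : ℝ) (v : Fin N → ℂ) (hv : euclNorm v = 1)
    (heig : H.mulVec v = (lam : ℂ) • v)
    (hloc : IsLocalized v Lc η) :
    |lam| ≤ (rhoL H Lc + Real.sqrt η * matOpNorm H) / Real.sqrt (1 - η) := by
  obtain ⟨S, rfl, hmass⟩ := hloc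
  rw [le_div_iff₀ (Real.sqrt_pos.2 (by linarith))]
  calc |lam| * √(1 - η) ≤ |lam| * √(∑ i ∈ S, ‖v i‖ ^ 2) := by gcongr
    _ ≤ specRad (H.submatrix (↑) (↑) : Matrix S S ℂ) +
          √(1 - ∑ i ∈ S, ‖v i‖ ^ 2) * matOpNorm H := hH.abs_mul_sqrt_mass_le S hv heig
    _ ≤ rhoL H S.card + √η * matOpNorm H := by
        refine add_le_add (specRad_submatrix_le_rhoL H S) ?_
        exact mul_le_mul_of_nonneg_right (Real.sqrt_le_sqrt (by linarith)) (norm_nonneg _)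

/-- localized eigenvectors force small eigenvalues (Lemma 4.2 of BGP). -/
theorem stmt15
    {N : ℕ} (H : Matrix (Fin N) (Fin N) ℂ) (hH : H.IsHermitian)
    (Lc : ℕ) (η : ℝ) (hη0 : 0 < η) (hη1 : η < 1)
    (lam : ℝ) (v : Fin N → ℂ) (hv : euclNorm v = 1)
    (heig : H.mulVec v = (lam : ℂ) • v)
    (hloc : IsLocalized v Lc η) :
    |lam| ≤ (rhoL H Lc + Real.sqrt η * matOpNorm H) / Real.sqrt (1 - η) :=
  stmt15_general H hH Lc η hη1 lam v hv heig hloc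

end
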